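/- Let (T_t)_{t>0} be a C₀ semigroup of linear isometries on the complex Banach space c₀, let k be an index, and suppose there exists δ > 0 such that for all 0 < t ≤ δ and all x ∈ c₀ with x(k) = 0 one has (T_t x)(k) = 0. Then for every t > 0 and every x ∈ c₀ with x(k) = 0 one has (T_t x)(k) = 0; consequently there is a function γ_k : (0,∞) → ℂ with |γ_k(t)| = 1 such that T_t e_k = γ_k(t) · e_k for all t > 0. -/

import Mathlib

open ZeroAtInfty Filter Topology

/-- `c₀` is modelled as `C₀(ℕ, ℂ)`, the space of sequences of complex numbers tending to `0`
with the supremum norm.  `stdBasis k` is the standard unit vector which is `1` in coordinate `k`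
and `0` elsewhere (indices are `0`-based, so `stdBasis (k-1)` is the paper's `e_k`). -/
noncomputable def stdBasis (k : ℕ) : C₀(ℕ, ℂ) :=
  { toFun := fun j => if j = k then 1 else 0
    continuous_toFun := continuous_of_discreteTopology
    zero_at_infty' := by
      rw [cocompact_eq_atTop]
      refine tendsto_nhds_of_eventually_eq ?_
      filter_upwards [eventually_gt_atTop k] with j hj
      simp [Nat.ne_of_gt hj] }


lemma coord_le (x : C₀(ℕ, ℂ)) (j : ℕ) : ‖x j‖ ≤ ‖x‖ := by
  rw [← ZeroAtInftyContinuousMap.norm_toBCF_eq_norm]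
  exact x.toBCF.norm_coe_le_norm j

lemma norm_le' {x : C₀(ℕ, ℂ)} {C : ℝ} (h0 : 0 ≤ C) (h : ∀ j, ‖x j‖ ≤ C) : ‖x‖ ≤ C := by
  rw [← ZeroAtInftyContinuousMap.norm_toBCF_eq_norm]
  exact (BoundedContinuousFunction.norm_le h0).mpr h

lemma stdBasis_apply (k j : ℕ) : stdBasis k j = if j = k then 1 else 0 := rfl

lemma stdBasis_norm (k : ℕ) : ‖stdBasis k‖ = 1 := by
  refine le_antisymm (norm_le' zero_le_one fun j => ?_) ?_
  · rw [stdBasis_apply]; split <;> simp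
  · have := coord_le (stdBasis k) k
    rw [stdBasis_apply] at this; simpa using this

/-- If `A` is an isometry and the `j`-th coordinate of `A e_j` has modulus `1`, then
`A` preserves vanishing of the `j`-th coordinate. -/
lemma coordZero_of_peak (A : C₀(ℕ, ℂ) →L[ℂ] C₀(ℕ, ℂ))
    (hiso : ∀ x : C₀(ℕ, ℂ), ‖A x‖ = ‖x‖) (j : ℕ)
    (hb : ‖(A (stdBasis j)) j‖ = 1) :
    ∀ x : C₀(ℕ, ℂ), x j = 0 → (A x) j = 0 := by
  intro x hx
  by_contra hc
  set b : ℂ := (A (stdBasis j)) j with hbdef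
  set c : ℂ := (A x) j with hcdef
  have hxne : x ≠ 0 := by
    intro h; apply hc; simp [hcdef, h]
  have hr : (0:ℝ) < ‖x‖ := norm_pos_iff.mpr hxne
  have hs : (0:ℝ) < ‖c‖ := norm_pos_iff.mpr hc
  -- the aligning scalar
  set u : ℂ := ((‖c‖ / ‖x‖ : ℝ) : ℂ) * b / c with hudef
  have hbne : b ≠ 0 := by
    intro h; rw [h] at hb; simp at hb
  have hu : ‖u‖ = 1 / ‖x‖ := by
    rw [hudef, norm_div, norm_mul, hb, Complex.norm_real]
    rw [Real.norm_of_nonneg (by positivity)]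
    field_simp
  have huc : b + u * c = b * ((1 + ‖c‖ / ‖x‖ : ℝ) : ℂ) := by
    have h1 : u * c = ((‖c‖ / ‖x‖ : ℝ) : ℂ) * b := by
      rw [hudef]; field_simp
    rw [h1]; push_cast; ring
  -- the test vector
  set w : C₀(ℕ, ℂ) := stdBasis j + u • x with hwdef
  have hw : ‖w‖ ≤ 1 := by
    refine norm_le' zero_le_one fun i => ?_
    have hwi : w i = stdBasis j i + u * x i := by simp [hwdef]
    by_cases hij : i = j
    · subst hij
      rw [hwi, hx, stdBasis_apply]
      simp
    · rw [hwi, stdBasis_apply, if_neg hij, zero_add, norm_mul, hu]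
      have := coord_le x i
      calc 1 / ‖x‖ * ‖x i‖ ≤ 1 / ‖x‖ * ‖x‖ := by
            apply mul_le_mul_of_nonneg_left this (by positivity)
        _ = 1 := by field_simp
  have hAw : (A w) j = b + u * c := by
    rw [hwdef, map_add, map_smul]
    simp [hbdef, hcdef]
  have hnorm : ‖(A w) j‖ = 1 + ‖c‖ / ‖x‖ := by
    rw [hAw, huc, norm_mul, hb, one_mul, Complex.norm_real,
      Real.norm_of_nonneg (by positivity)]
  have : (1 : ℝ) + ‖c‖ / ‖x‖ ≤ 1 := by
    calc 1 + ‖c‖ / ‖x‖ = ‖(A w) j‖ := hnorm.symm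
      _ ≤ ‖A w‖ := coord_le _ _
      _ = ‖w‖ := hiso w
      _ ≤ 1 := hw
  have hpos : (0:ℝ) < ‖c‖ / ‖x‖ := by positivity
  linarith

/-- If `A e_j` is within `1/2` of `e_j` and `A` is isometric, then the `j`-th coordinate of
`A e_j` has modulus exactly `1`. -/
lemma peak (A : C₀(ℕ, ℂ) →L[ℂ] C₀(ℕ, ℂ))
    (hiso : ∀ x : C₀(ℕ, ℂ), ‖A x‖ = ‖x‖) (j : ℕ)
    (hnear : ‖A (stdBasis j) - stdBasis j‖ < 1/2) :
    ‖(A (stdBasis j)) j‖ = 1 := by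
  set v : C₀(ℕ, ℂ) := A (stdBasis j) with hvdef
  have hv1 : ‖v‖ = 1 := by rw [hvdef, hiso, stdBasis_norm]
  refine le_antisymm (hv1 ▸ coord_le v j) ?_
  have hmax : ‖v‖ ≤ max ‖v j‖ (1/2) := by
    refine norm_le' (le_max_of_le_right (by norm_num)) fun i => ?_
    by_cases hij : i = j
    · subst hij; exact le_max_left _ _
    · refine le_max_of_le_right ?_
      have h0 : v i = (v - stdBasis j) i := by
        simp [stdBasis_apply, hij]
      rw [h0]
      exact (coord_le _ i).trans hnear.le
  rw [hv1] at hmax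
  rcases le_max_iff.mp hmax with h | h
  · exact h
  · norm_num at h

/-- For every coordinate `j`, the invariance of the `j`-th coordinate holds for all `t > 0`. -/
lemma coordZero (T : ℝ → C₀(ℕ, ℂ) →L[ℂ] C₀(ℕ, ℂ))
    (hsemi : ∀ s t : ℝ, 0 < s → 0 < t → T (s + t) = (T s).comp (T t))
    (hcont : ∀ x : C₀(ℕ, ℂ), Tendsto (fun t => T t x) (𝓝[>] (0 : ℝ)) (𝓝 x))
    (hiso : ∀ t : ℝ, 0 < t → ∀ x : C₀(ℕ, ℂ), ‖T t x‖ = ‖x‖) (j : ℕ) :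
    ∀ t : ℝ, 0 < t → ∀ x : C₀(ℕ, ℂ), x j = 0 → (T t x) j = 0 := by
  -- find a small interval where `T t e_j` is near `e_j`
  have hev : ∀ᶠ s in 𝓝[>] (0:ℝ), ‖T s (stdBasis j) - stdBasis j‖ < 1/2 := by
    have h := Metric.tendsto_nhds.mp (hcont (stdBasis j)) (1/2) (by norm_num)
    filter_upwards [h] with s hs
    rwa [dist_eq_norm] at hs
  rw [eventually_nhdsWithin_iff, Metric.eventually_nhds_iff] at hev
  obtain ⟨ε, hε, hball⟩ := hev
  set d : ℝ := ε / 2 with hddef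
  have hd : 0 < d := by positivity
  have hsmall : ∀ s : ℝ, 0 < s → s ≤ d → ∀ x : C₀(ℕ, ℂ), x j = 0 → (T s x) j = 0 := by
    intro s hs hsd
    refine coordZero_of_peak (T s) (hiso s hs) j (peak (T s) (hiso s hs) j ?_)
    refine hball ?_ hs
    rw [Real.dist_eq, sub_zero, abs_of_pos hs]
    calc s ≤ d := hsd
      _ < ε := by rw [hddef]; linarith
  have key : ∀ n : ℕ, ∀ t : ℝ, 0 < t → t ≤ n * d →
      ∀ x : C₀(ℕ, ℂ), x j = 0 → (T t x) j = 0 := by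
    intro n
    induction n with
    | zero => intro t ht ht' x _; exfalso; simp at ht'; linarith
    | succ n ih =>
      intro t ht ht' x hx
      by_cases h : t ≤ d
      · exact hsmall t ht h x hx
      · push_neg at h
        have h1 : 0 < t - d := by linarith
        have h2 : t - d ≤ n * d := by
          have : t ≤ (n + 1) * d := by exact_mod_cast ht'
          linarith [this]
        have hts : t = d + (t - d) := by ring
        rw [hts, hsemi d (t - d) hd h1]
        exact hsmall d hd le_rfl _ (ih (t - d) h1 h2 x hx)
  intro t ht x hx
  obtain ⟨n, hn⟩ := exists_nat_ge (t / d)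
  have : t ≤ n * d := by
    rw [div_le_iff₀ hd] at hn
    exact hn
  exact key n t ht this x hx

/-- If `(T_t)_{t>0}` is a `C₀` isometric semigroup on `c₀` and for some `δ > 0` the `k`-th
coordinate of `T_t x` vanishes whenever `0 < t ≤ δ` and `x(k) = 0`, then the same holds for all
`t > 0`, and consequently `T_t e_k = γ_k(t) e_k` for some unimodular `γ_k(t)`. -/
theorem c0_isometric_semigroup_coordinate_invariance
    (T : ℝ → C₀(ℕ, ℂ) →L[ℂ] C₀(ℕ, ℂ))
    (hsemi : ∀ s t : ℝ, 0 < s → 0 < t → T (s + t) = (T s).comp (T t))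
    (hcont : ∀ x : C₀(ℕ, ℂ), Tendsto (fun t => T t x) (𝓝[>] (0 : ℝ)) (𝓝 x))
    (hiso : ∀ t : ℝ, 0 < t → ∀ x : C₀(ℕ, ℂ), ‖T t x‖ = ‖x‖)
    (k : ℕ) (δ : ℝ) (hδ : 0 < δ)
    (hsmallt : ∀ t : ℝ, 0 < t → t ≤ δ → ∀ x : C₀(ℕ, ℂ), x k = 0 → (T t x) k = 0) :
    (∀ t : ℝ, 0 < t → ∀ x : C₀(ℕ, ℂ), x k = 0 → (T t x) k = 0) ∧
      ∃ γ : ℝ → ℂ, ∀ t : ℝ, 0 < t →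
        ‖γ t‖ = 1 ∧ T t (stdBasis k) = γ t • stdBasis k := by
  constructor
  · exact coordZero T hsemi hcont hiso k
  · refine ⟨fun t => (T t (stdBasis k)) k, fun t ht => ?_⟩
    have heq : T t (stdBasis k) = (T t (stdBasis k)) k • stdBasis k := by
      ext i
      by_cases hik : i = k
      · subst hik
        simp [stdBasis_apply]
      · have h0 : (T t (stdBasis k)) i = 0 := by
          refine coordZero T hsemi hcont hiso i t ht (stdBasis k) ?_
          simp [stdBasis_apply, hik]
        simp [h0, stdBasis_apply, hik]
    have hnorm : ‖(T t (stdBasis k)) k‖ = 1 := by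
      have h1 : ‖T t (stdBasis k)‖ = 1 := by rw [hiso t ht, stdBasis_norm]
      rw [heq] at h1
      rw [norm_smul ((T t (stdBasis k)) k) (stdBasis k), stdBasis_norm, mul_one] at h1
      exact h1
    exact ⟨hnorm, heq⟩
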